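/- Let u_1, ..., u_{d-2} be linearly independent vectors in ℝ^d and let f_1, f_2, f'_1, f'_2 ∈ ℝ^d. Define linear forms φ(v) = det(v, u_2, ..., u_{d-2}, f_1, f_2)·det(u_1, ..., u_{d-2}, f'_1, f'_2) and ψ(v) = det(v, u_2, ..., u_{d-2}, f'_1, f'_2)·det(u_1, ..., u_{d-2}, f_1, f_2). If φ = ψ as linear forms and both determinants det(u_1,...,u_{d-2},f_1,f_2) and det(u_1,...,u_{d-2},f'_1,f'_2) are nonzero, then Span(u_2, ..., u_{d-2}, f_1, f_2) = Span(u_2, ..., u_{d-2}, f'_1, f'_2). -/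

import Mathlib

/-!
If `det(u₁, …, u_{d-2}, f₁, f₂) ≠ 0`, these columns form a basis and, by Cramer's rule,
`v ↦ det(v, u₂, …, u_{d-2}, f₁, f₂)` is a nonzero multiple of the coordinate of `v` along `u₁`;
its kernel is therefore exactly `Span(u₂, …, u_{d-2}, f₁, f₂)`. The hypothesis `φ = ψ` makes the
two such linear forms proportional by nonzero factors, so their kernels agree.
-/

/-- The determinant of the `(m+2) × (m+2)` matrix whose columns are
`w, u 1, ..., u (m-1), g 0, g 1` (the column of index `0` among the `u`'s being
replaced by `w`). -/
noncomputable def colDet (m : ℕ) (u : Fin m → (Fin (m + 2) → ℝ))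
    (w : Fin (m + 2) → ℝ) (g : Fin 2 → (Fin (m + 2) → ℝ)) : ℝ :=
  Matrix.det (Matrix.of fun i j =>
    (Sum.elim (fun k : Fin m => if (k : ℕ) = 0 then w else u k) g
      (finSumFinEquiv.symm j)) i)

open Module Submodule Function

theorem Module.Basis.mem_span_image_ne_iff_coord_eq_zero {R M ι : Type*} [Semiring R]
    [AddCommMonoid M] [Module R M] (b : Basis ι R M) (i : ι) (x : M) :
    x ∈ span R (b '' {j | j ≠ i}) ↔ b.coord i x = 0 := by
  rw [b.mem_span_image, coord_apply, Set.subset_def]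
  simp [not_imp_not]

theorem Matrix.mem_span_image_ne_iff_det_update_eq_zero {K ι : Type*} [Field K] [Fintype ι]
    [DecidableEq ι] {v : ι → ι → K} (hv : (Matrix.of v).det ≠ 0) (i : ι) (w : ι → K) :
    w ∈ span K (v '' {j | j ≠ i}) ↔ (Matrix.of (update v i w)).det = 0 := by
  have hli : LinearIndependent K v := Matrix.linearIndependent_rows_of_det_ne_zero hv
  have hsp : ⊤ ≤ span K (Set.range v) := (hli.span_eq_top_of_card_eq_finrank' (by simp)).ge
  have cramer := congr($((Pi.basisFun K ι).det_smul_mk_coord_eq_det_update hli hsp i) w)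
  simp only [LinearMap.smul_apply, smul_eq_mul, AlternatingMap.coe_multilinearMap,
    Pi.basisFun_det_apply, MultilinearMap.toLinearMap_apply] at cramer
  rw [← cramer, mul_eq_zero_iff_left hv, ← Basis.mem_span_image_ne_iff_coord_eq_zero,
    Basis.coe_mk]

theorem Fin.natAdd_ne_castAdd {m n : ℕ} (i : Fin m) (k : Fin n) :
    Fin.natAdd m k ≠ Fin.castAdd n i :=
  Fin.ne_of_val_ne (by simp; omega)

section colDet

variable {m : ℕ} (hm : 0 < m) (u : Fin m → Fin (m + 2) → ℝ) (g : Fin 2 → Fin (m + 2) → ℝ)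

theorem colDet_eq_det_update_append (w : Fin (m + 2) → ℝ) :
    colDet m u w g = (Matrix.of (update (Fin.append u g) (Fin.castAdd 2 ⟨0, hm⟩) w)).det := by
  rw [colDet, ← Matrix.det_transpose]
  congr 1
  ext j i
  induction j using Fin.addCases with
  | left k =>
    simp only [Matrix.transpose_apply, Matrix.of_apply, finSumFinEquiv_symm_apply_castAdd,
      Sum.elim_inl, update_apply, Fin.ext_iff, Fin.append_left]
    rfl
  | right k =>
    simp only [Matrix.transpose_apply, Matrix.of_apply, finSumFinEquiv_symm_apply_natAdd,
      Sum.elim_inr, update_of_ne (Fin.natAdd_ne_castAdd _ k), Fin.append_right]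

theorem image_append_ne_castAdd_zero :
    Fin.append u g '' {j | j ≠ Fin.castAdd 2 ⟨0, hm⟩} = u '' {k | (k : ℕ) ≠ 0} ∪ {g 0, g 1} := by
  ext x
  constructor
  · rintro ⟨j, hj, rfl⟩
    induction j using Fin.addCases with
    | left k => exact .inl ⟨k, fun hk => hj (Fin.ext hk), (Fin.append_left ..).symm⟩
    | right k =>
      right
      fin_cases k
      exacts [.inl (Fin.append_right ..), .inr (Fin.append_right ..)]
  · rintro (⟨k, hk, rfl⟩ | hx | hx)
    · exact ⟨Fin.castAdd 2 k, fun h => hk (congrArg Fin.val h), Fin.append_left ..⟩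
    · exact ⟨Fin.natAdd m 0, Fin.natAdd_ne_castAdd _ 0, by rw [hx, Fin.append_right]⟩
    · exact ⟨Fin.natAdd m 1, Fin.natAdd_ne_castAdd _ 1, by rw [hx, Fin.append_right]⟩

theorem mem_span_iff_colDet_eq_zero (hd : colDet m u (u ⟨0, hm⟩) g ≠ 0)
    (v : Fin (m + 2) → ℝ) :
    v ∈ span ℝ (u '' {k | (k : ℕ) ≠ 0} ∪ {g 0, g 1}) ↔ colDet m u v g = 0 := by
  have hcols : colDet m u (u ⟨0, hm⟩) g = (Matrix.of (Fin.append u g)).det := by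
    rw [colDet_eq_det_update_append hm, update_eq_self_iff.mpr (Fin.append_left ..).symm]
  rw [← image_append_ne_castAdd_zero hm, colDet_eq_det_update_append hm,
    Matrix.mem_span_image_ne_iff_det_update_eq_zero (hcols ▸ hd)]

end colDet

theorem stmt5_general (m : ℕ) (hm : 0 < m) (u : Fin m → (Fin (m + 2) → ℝ))
    (f f' : Fin 2 → (Fin (m + 2) → ℝ))
    (hd1 : colDet m u (u ⟨0, hm⟩) f ≠ 0)
    (hd2 : colDet m u (u ⟨0, hm⟩) f' ≠ 0)
    (heq : ∀ v : Fin (m + 2) → ℝ,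
      colDet m u v f * colDet m u (u ⟨0, hm⟩) f'
        = colDet m u v f' * colDet m u (u ⟨0, hm⟩) f) :
    Submodule.span ℝ ((u '' {k : Fin m | (k : ℕ) ≠ 0}) ∪ {f 0, f 1})
      = Submodule.span ℝ ((u '' {k : Fin m | (k : ℕ) ≠ 0}) ∪ {f' 0, f' 1}) := by
  ext v
  rw [mem_span_iff_colDet_eq_zero hm u f hd1, mem_span_iff_colDet_eq_zero hm u f' hd2]
  constructor
  · intro h
    simpa [h, hd1] using heq v
  · intro h
    simpa [h, hd2] using heq v

/-- If the linear forms
`φ(v) = det(v,u₂,...,u_{d-2},f₁,f₂)·det(u₁,...,u_{d-2},f'₁,f'₂)` and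
`ψ(v) = det(v,u₂,...,u_{d-2},f'₁,f'₂)·det(u₁,...,u_{d-2},f₁,f₂)` coincide and
both determinants are nonzero, then
`Span(u₂,...,u_{d-2},f₁,f₂) = Span(u₂,...,u_{d-2},f'₁,f'₂)`. -/
theorem stmt5 (m : ℕ) (hm : 0 < m) (u : Fin m → (Fin (m + 2) → ℝ))
    (hu : LinearIndependent ℝ u) (f f' : Fin 2 → (Fin (m + 2) → ℝ))
    (hd1 : colDet m u (u ⟨0, hm⟩) f ≠ 0)
    (hd2 : colDet m u (u ⟨0, hm⟩) f' ≠ 0)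
    (heq : ∀ v : Fin (m + 2) → ℝ,
      colDet m u v f * colDet m u (u ⟨0, hm⟩) f'
        = colDet m u v f' * colDet m u (u ⟨0, hm⟩) f) :
    Submodule.span ℝ ((u '' {k : Fin m | (k : ℕ) ≠ 0}) ∪ {f 0, f 1})
      = Submodule.span ℝ ((u '' {k : Fin m | (k : ℕ) ≠ 0}) ∪ {f' 0, f' 1}) :=
  stmt5_general m hm u f f' hd1 hd2 heq
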